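/- arXiv:1803.04371 — 6 statements merged into one kernel-verified Lean document; each statement's English description precedes it below -/
import Mathlib

section
/- For two positive bounded linear operators A and B on a separable Hilbert space and any s with 0 ≤ s ≤ 1, the operator norm satisfies ‖A^s B^s‖ ≤ ‖AB‖^s. -/
/-!
For `f s = ‖a ^ s * b ^ s‖`, the C⋆-identity `‖x‖ ^ 2 = r(x⋆ x)` together with
`r(x y) = r(y x)` for the spectral radius gives
`f ((s + t) / 2) ^ 2 = r(a ^ s a ^ t b ^ t b ^ s) = r(a ^ t b ^ t b ^ s a ^ s) ≤ f t * f s`.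
So `f` is midpoint log-convex; as `f 0 ≤ 1` and `f 1 = ‖a b‖`, the bound `f s ≤ ‖a b‖ ^ s`
holds at dyadic `s`, and then on `(0, 1]` by continuity of `s ↦ a ^ s`.
-/

open scoped NNReal ENNReal
open Filter Topology

theorem natCast_div_two_pow_mem_of_midpoint_mem {S : Set ℝ} (h0 : 0 ∈ S) (h1 : 1 ∈ S)
    (hmid : ∀ s ∈ S, ∀ t ∈ S, (s + t) / 2 ∈ S) (n : ℕ) :
    ∀ k : ℕ, k ≤ 2 ^ n → (k : ℝ) / 2 ^ n ∈ S := by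
  induction n with
  | zero =>
    intro k hk
    interval_cases k <;> simpa
  | succ n ih =>
    intro k hk
    rw [pow_succ] at hk
    obtain ⟨j, rfl | rfl⟩ := Nat.even_or_odd' k
    · convert ih j (by omega) using 1
      push_cast
      field_simp
      ring
    · convert hmid _ (ih j (by omega)) _ (ih (j + 1) (by omega)) using 1
      push_cast
      field_simp
      ring

theorem le_rpow_of_sq_midpoint_le {f : ℝ → ℝ} {c : ℝ} (hf_nonneg : ∀ s, 0 ≤ f s)
    (hf : ContinuousOn f (Set.Ioi 0)) (h0 : f 0 ≤ 1) (h1 : f 1 ≤ c)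
    (hmid : ∀ s t, 0 ≤ s → 0 ≤ t → f ((s + t) / 2) ^ 2 ≤ f s * f t)
    {s : ℝ} (hs0 : 0 ≤ s) (hs1 : s ≤ 1) : f s ≤ c ^ s := by
  have hc : 0 ≤ c := (hf_nonneg 1).trans h1
  have hS : ∀ n, ∀ k : ℕ, k ≤ 2 ^ n → (k : ℝ) / 2 ^ n ∈ {s : ℝ | 0 ≤ s ∧ f s ≤ c ^ s} := by
    refine natCast_div_two_pow_mem_of_midpoint_mem ⟨le_rfl, by simpa⟩ ⟨zero_le_one, by simpa⟩ ?_
    rintro s ⟨hs, hfs⟩ t ⟨ht, hft⟩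
    refine ⟨by positivity, le_of_pow_le_pow_left₀ two_ne_zero (by positivity) ?_⟩
    calc f ((s + t) / 2) ^ 2 ≤ f s * f t := hmid s t hs ht
      _ ≤ c ^ s * c ^ t := mul_le_mul hfs hft (hf_nonneg t) (by positivity)
      _ = (c ^ ((s + t) / 2)) ^ 2 := by
        rw [← Real.rpow_add_of_nonneg hc hs ht, ← Real.rpow_mul_natCast hc]
        ring_nf
  rcases hs0.eq_or_lt with rfl | hs
  · simpa using h0
  set d : ℕ → ℝ := fun n => (⌊s * 2 ^ n⌋₊ : ℝ) / 2 ^ n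
  have hd : Tendsto d atTop (𝓝 s) :=
    (tendsto_nat_floor_mul_div_atTop hs0).comp (tendsto_pow_atTop_atTop_of_one_lt one_lt_two)
  have hfd : ∀ n, f (d n) ≤ c ^ d n := fun n =>
    (hS n _ (Nat.floor_le_of_le (by push_cast; exact mul_le_of_le_one_left (by positivity) hs1))).2
  exact le_of_tendsto_of_tendsto' ((hf.continuousAt (Ioi_mem_nhds hs)).tendsto.comp hd)
    ((Real.continuousAt_const_rpow' hs.ne').tendsto.comp hd) hfd

theorem spectralRadius_mul_comm {𝕜 A : Type*} [NormedField 𝕜] [Ring A] [Algebra 𝕜 A]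
    (a b : A) : spectralRadius 𝕜 (a * b) = spectralRadius 𝕜 (b * a) := by
  suffices h : ∀ x y : A, spectralRadius 𝕜 (x * y) ≤ spectralRadius 𝕜 (y * x) from
    le_antisymm (h a b) (h b a)
  intro x y
  refine iSup₂_le fun k hk => ?_
  rcases eq_or_ne k 0 with rfl | hk0
  · simp
  · have : k ∈ spectrum 𝕜 (y * x) \ {0} := spectrum.nonzero_mul_comm (𝕜 := 𝕜) x y ▸ ⟨hk, hk0⟩
    exact le_iSup₂ (f := fun k (_ : k ∈ spectrum 𝕜 (y * x)) => (‖k‖₊ : ℝ≥0∞)) k this.1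

theorem IsSelfAdjoint.norm_mul_comm {A : Type*} [NormedRing A] [StarRing A] [NormedStarGroup A]
    {x y : A} (hx : IsSelfAdjoint x) (hy : IsSelfAdjoint y) : ‖x * y‖ = ‖y * x‖ := by
  rw [← norm_star (x * y), star_mul, hx.star_eq, hy.star_eq]

section CStarAlgebra

variable {A : Type*} [CStarAlgebra A]

theorem toReal_spectralRadius_mul_le_norm_mul_swap [Nontrivial A] (x y : A) :
    (spectralRadius ℂ (x * y)).toReal ≤ ‖y * x‖ := by
  rw [spectralRadius_mul_comm]
  exact ENNReal.toReal_le_coe_of_le_coe (spectrum.spectralRadius_le_nnnorm _)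

theorem IsSelfAdjoint.norm_mul_sq {x y : A} (hx : IsSelfAdjoint x) (hy : IsSelfAdjoint y) :
    ‖x * y‖ ^ 2 = (spectralRadius ℂ (x * x * (y * y))).toReal := by
  rw [← CStarAlgebra.toReal_spectralRadius_star_mul_self_eq_norm_sq, star_mul, hx.star_eq,
    hy.star_eq, show y * x * (x * y) = y * (x * x * y) by noncomm_ring, spectralRadius_mul_comm,
    mul_assoc]

variable [PartialOrder A] [StarOrderedRing A]

namespace CFC

theorem rpow_add_of_nonneg (a : A) {s t : ℝ} (hs : 0 ≤ s) (ht : 0 ≤ t) :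
    a ^ (s + t) = a ^ s * a ^ t := by
  simp only [rpow_def]
  rw [← cfc_mul _ _ a (NNReal.continuous_rpow_const hs).continuousOn
    (NNReal.continuous_rpow_const ht).continuousOn]
  exact cfc_congr fun x _ => NNReal.rpow_add_of_nonneg x hs ht

theorem continuousOn_const_rpow (a : A) : ContinuousOn (fun s : ℝ => a ^ s) (Set.Ioi 0) := by
  intro s₀ hs₀
  refine ContinuousAt.continuousWithinAt ?_
  simp only [rpow_def]
  set U := Set.Icc (s₀ / 2) (s₀ + 1)
  have hU : U ∈ 𝓝 s₀ := Icc_mem_nhds (by linarith [hs₀.out]) (by linarith)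
  have hcont : ContinuousOn (fun p : ℝ × ℝ≥0 => p.2 ^ p.1) (U ×ˢ spectrum ℝ≥0 a) :=
    fun p hp => ContinuousAt.continuousWithinAt <| ContinuousAt.comp (f := Prod.swap) (x := p)
      (NNReal.continuousAt_rpow (Or.inr (by linarith [hs₀.out, hp.1.1])))
      continuous_swap.continuousAt
  have hunif := (isCompact_Icc.prod (ContinuousFunctionalCalculus.isCompact_spectrum a))
    |>.uniformContinuousOn_of_continuous hcont
  refine continuousAt_cfc_fun (f := fun s (x : ℝ≥0) => x ^ s) ?_ ?_
  · simpa only [nhdsWithin_eq_nhds.2 hU] using hunif.tendstoUniformlyOn (mem_of_mem_nhds hU)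
  · filter_upwards [Ioi_mem_nhds hs₀] with s hs
    exact (NNReal.continuous_rpow_const (le_of_lt hs)).continuousOn

end CFC

open CFC

theorem norm_rpow_mul_rpow_midpoint_sq_le [Nontrivial A] (a b : A) {s t : ℝ} (hs : 0 ≤ s)
    (ht : 0 ≤ t) :
    ‖a ^ ((s + t) / 2) * b ^ ((s + t) / 2)‖ ^ 2 ≤ ‖a ^ s * b ^ s‖ * ‖a ^ t * b ^ t‖ := by
  have hm : 0 ≤ (s + t) / 2 := by positivity
  have split : ∀ (c : A) {u v : ℝ}, 0 ≤ u → 0 ≤ v → u + v = s + t →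
      c ^ ((s + t) / 2) * c ^ ((s + t) / 2) = c ^ u * c ^ v := by
    intro c u v hu hv huv
    rw [← rpow_add_of_nonneg c hm hm, ← rpow_add_of_nonneg c hu hv, huv, add_halves]
  have hsa : ∀ (c : A) (u : ℝ), IsSelfAdjoint (c ^ u) := fun c u => rpow_nonneg.isSelfAdjoint
  calc ‖a ^ ((s + t) / 2) * b ^ ((s + t) / 2)‖ ^ 2
      = (spectralRadius ℂ (a ^ s * (a ^ t * b ^ t * b ^ s))).toReal := by
        rw [(hsa a _).norm_mul_sq (hsa b _), split a hs ht rfl, split b ht hs (add_comm t s)]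
        simp only [mul_assoc]
    _ ≤ ‖a ^ t * b ^ t * b ^ s * a ^ s‖ := toReal_spectralRadius_mul_le_norm_mul_swap _ _
    _ ≤ ‖a ^ t * b ^ t‖ * ‖b ^ s * a ^ s‖ := by
        rw [mul_assoc _ (b ^ s)]
        exact norm_mul_le _ _
    _ = ‖a ^ s * b ^ s‖ * ‖a ^ t * b ^ t‖ := by
        rw [(hsa b s).norm_mul_comm (hsa a s), mul_comm]

theorem norm_rpow_mul_rpow_le {a b : A} (ha : 0 ≤ a) (hb : 0 ≤ b) {s : ℝ} (hs0 : 0 ≤ s)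
    (hs1 : s ≤ 1) : ‖a ^ s * b ^ s‖ ≤ ‖a * b‖ ^ s := by
  cases subsingleton_or_nontrivial A
  · simp [Subsingleton.elim (a ^ s * b ^ s) 0, Real.rpow_nonneg (norm_nonneg _)]
  refine le_rpow_of_sq_midpoint_le (f := fun s => ‖a ^ s * b ^ s‖) (fun _ => norm_nonneg _)
    ?_ ?_ ?_ (fun s t hs ht => norm_rpow_mul_rpow_midpoint_sq_le a b hs ht) hs0 hs1
  · exact ((continuousOn_const_rpow a).mul (continuousOn_const_rpow b)).norm
  · simp [rpow_zero a ha, rpow_zero b hb]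
  · simp [rpow_one a ha, rpow_one b hb]

end CStarAlgebra

theorem cordes_inequality_general {H : Type*} [NormedAddCommGroup H] [InnerProductSpace ℂ H]
    [CompleteSpace H]
    (A B : H →L[ℂ] H) (hA : A.IsPositive) (hB : B.IsPositive)
    (s : ℝ) (hs0 : 0 ≤ s) (hs1 : s ≤ 1) :
    ‖cfc (fun u : ℝ => u ^ s) A * cfc (fun u : ℝ => u ^ s) B‖ ≤ ‖A * B‖ ^ s := by
  rw [← ContinuousLinearMap.nonneg_iff_isPositive] at hA hB
  rw [← CFC.rpow_eq_cfc_real hA, ← CFC.rpow_eq_cfc_real hB]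
  exact norm_rpow_mul_rpow_le hA hB hs0 hs1

/-- **Cordes inequality.** For two positive bounded linear operators `A` and `B` on a
separable Hilbert space and any `s` with `0 ≤ s ≤ 1`, the operator norm satisfies
`‖A^s B^s‖ ≤ ‖A B‖^s`, where powers are taken via the continuous functional calculus. -/
theorem cordes_inequality {H : Type*} [NormedAddCommGroup H] [InnerProductSpace ℂ H]
    [CompleteSpace H] [TopologicalSpace.SeparableSpace H]
    (A B : H →L[ℂ] H) (hA : A.IsPositive) (hB : B.IsPositive)
    (s : ℝ) (hs0 : 0 ≤ s) (hs1 : s ≤ 1) :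
    ‖cfc (fun u : ℝ => u ^ s) A * cfc (fun u : ℝ => u ^ s) B‖ ≤ ‖A * B‖ ^ s :=
  cordes_inequality_general A B hA hB s hs0 hs1
end

section
/- Let P be an orthogonal projection on a Hilbert space H and let A, B be positive semidefinite bounded self-adjoint operators on H. For any s, t with 0 ≤ s, t ≤ 1/2, ‖A^s (I − P) A^t‖ ≤ ‖A − B‖^{s+t} + ‖B^{1/2}(I − P)B^{1/2}‖^{s+t}. -/
open scoped NNReal

section Aux

variable {𝔸 : Type*} [CStarAlgebra 𝔸]

/-- A self-adjoint idempotent has norm at most one. -/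
lemma aux_idem_norm_le_one {q : 𝔸} (hq : IsIdempotentElem q) (hqsa : IsSelfAdjoint q) :
    ‖q‖ ≤ 1 := by
  have h : ‖q‖ * ‖q‖ = ‖q‖ := by
    calc ‖q‖ * ‖q‖ = ‖star q * q‖ := (CStarRing.norm_star_mul_self).symm
    _ = ‖q‖ := by rw [hqsa.star_eq, hq.eq]
  nlinarith [norm_nonneg q]

/-- Scalar tangent-line bound for `u ^ r`, `r ∈ [0,1]`. -/
lemma aux_rpow_tangent {r l u : ℝ} (hr0 : 0 ≤ r) (hr1 : r ≤ 1) (hl : 0 < l) (hu : 0 ≤ u) :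
    u ^ r ≤ (1 - r) * l ^ r + r * l ^ (r - 1) * u := by
  have h := Real.geom_mean_le_arith_mean2_weighted (by linarith : (0:ℝ) ≤ 1 - r) hr0 hl.le hu
    (by ring)
  have h1 : l ^ (r - 1) * l ^ (1 - r) = 1 := by
    rw [← Real.rpow_add hl]; norm_num
  have h2 : l ^ (r - 1) * l = l ^ r := by
    calc l ^ (r - 1) * l = l ^ (r - 1) * l ^ (1:ℝ) := by rw [Real.rpow_one]
    _ = l ^ (r - 1 + 1) := (Real.rpow_add hl _ _).symm
    _ = l ^ r := by norm_num
  have hpos : 0 ≤ l ^ (r - 1) := (Real.rpow_pos_of_pos hl _).le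
  calc u ^ r = (l ^ (r - 1) * l ^ (1 - r)) * u ^ r := by rw [h1, one_mul]
  _ = l ^ (r - 1) * (l ^ (1 - r) * u ^ r) := by ring
  _ ≤ l ^ (r - 1) * ((1 - r) * l + r * u) := by
      exact mul_le_mul_of_nonneg_left h hpos
  _ = (1 - r) * (l ^ (r - 1) * l) + r * l ^ (r - 1) * u := by ring
  _ = (1 - r) * l ^ r + r * l ^ (r - 1) * u := by rw [h2]

variable [PartialOrder 𝔸] [StarOrderedRing 𝔸]

/-- Key bound: `‖q (a^r) q‖ ≤ ‖q a q‖ ^ r` for a self-adjoint idempotent `q`,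
positive `a` and `r ∈ [0,1]`. -/
lemma aux_key {a q : 𝔸} (ha : 0 ≤ a) (hq : IsIdempotentElem q) (hqsa : IsSelfAdjoint q)
    {r : ℝ} (hr0 : 0 ≤ r) (hr1 : r ≤ 1) :
    ‖q * cfc (fun u : ℝ => u ^ r) a * q‖ ≤ ‖q * a * q‖ ^ r := by
  rcases hr0.eq_or_lt with rfl | hrpos
  · -- r = 0
    have h1 : cfc (fun u : ℝ => u ^ (0:ℝ)) a = 1 := by
      calc cfc (fun u : ℝ => u ^ (0:ℝ)) a = cfc (fun _ : ℝ => (1:ℝ)) a := by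
            refine cfc_congr fun x hx => by simp [Real.rpow_zero]
      _ = 1 := cfc_const_one ℝ a
    rw [h1, mul_one, hq.eq, Real.rpow_zero]
    exact aux_idem_norm_le_one hq hqsa
  set N := ‖q * a * q‖ with hN
  have hN0 : 0 ≤ N := norm_nonneg _
  have hqn : ‖q‖ ≤ 1 := aux_idem_norm_le_one hq hqsa
  have hcont : ContinuousOn (fun u : ℝ => u ^ r) (spectrum ℝ a) :=
    (Real.continuous_rpow_const hr0).continuousOn
  have key : ∀ l : ℝ, N < l → ‖q * cfc (fun u : ℝ => u ^ r) a * q‖ ≤ l ^ r := by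
    intro l hl
    have hl0 : 0 < l := lt_of_le_of_lt hN0 hl
    have hd0 : 0 ≤ r * l ^ (r - 1) := by positivity
    have hc0 : 0 ≤ (1 - r) * l ^ r := by
      have : 0 ≤ l ^ r := (Real.rpow_pos_of_pos hl0 _).le
      nlinarith
    have h1 : cfc (fun u : ℝ => u ^ r) a
        ≤ cfc (fun u : ℝ => (1 - r) * l ^ r + r * l ^ (r - 1) * u) a := by
      refine cfc_mono fun x hx => ?_
      exact aux_rpow_tangent hrpos.le hr1 hl0 (spectrum_nonneg_of_nonneg ha hx)
    have h2 : cfc (fun u : ℝ => (1 - r) * l ^ r + r * l ^ (r - 1) * u) a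
        = algebraMap ℝ 𝔸 ((1 - r) * l ^ r) + (r * l ^ (r - 1)) • a := by
      rw [cfc_add a (fun _ : ℝ => (1 - r) * l ^ r) (fun u : ℝ => r * l ^ (r - 1) * u)
        (by fun_prop) (by fun_prop), cfc_const _ a, cfc_const_mul_id _ a]
    have h3 : q * cfc (fun u : ℝ => u ^ r) a * q
        ≤ ((1 - r) * l ^ r) • q + (r * l ^ (r - 1)) • (q * a * q) := by
      have := hqsa.conjugate_le_conjugate (h1.trans_eq h2)
      refine this.trans_eq ?_
      rw [Algebra.algebraMap_eq_smul_one]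
      simp only [mul_add, add_mul, mul_smul_comm, smul_mul_assoc, mul_one, mul_assoc]
      rw [hq.eq]
    have h4 : 0 ≤ q * cfc (fun u : ℝ => u ^ r) a * q := by
      have hnn : 0 ≤ cfc (fun u : ℝ => u ^ r) a :=
        cfc_nonneg fun x hx => Real.rpow_nonneg (spectrum_nonneg_of_nonneg ha hx) _
      simpa [hqsa.star_eq] using star_left_conjugate_nonneg hnn q
    have h5 : ‖q * cfc (fun u : ℝ => u ^ r) a * q‖
        ≤ ‖((1 - r) * l ^ r) • q + (r * l ^ (r - 1)) • (q * a * q)‖ :=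
      CStarAlgebra.norm_le_norm_of_nonneg_of_le h4 h3
    have h6 : ‖((1 - r) * l ^ r) • q + (r * l ^ (r - 1)) • (q * a * q)‖
        ≤ (1 - r) * l ^ r * ‖q‖ + r * l ^ (r - 1) * N := by
      refine (norm_add_le _ _).trans ?_
      rw [norm_smul, norm_smul, Real.norm_eq_abs, Real.norm_eq_abs,
        abs_of_nonneg hc0, abs_of_nonneg hd0]
    have h7 : l ^ (r - 1) * l = l ^ r := by
      calc l ^ (r - 1) * l = l ^ (r - 1) * l ^ (1:ℝ) := by rw [Real.rpow_one]
      _ = l ^ (r - 1 + 1) := (Real.rpow_add hl0 _ _).symm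
      _ = l ^ r := by norm_num
    have h8 : (1 - r) * l ^ r * ‖q‖ + r * l ^ (r - 1) * N ≤ l ^ r := by
      have hNl : N ≤ l := hl.le
      have hlr : 0 ≤ l ^ r := (Real.rpow_pos_of_pos hl0 _).le
      have hlr1 : 0 ≤ l ^ (r - 1) := (Real.rpow_pos_of_pos hl0 _).le
      nlinarith [norm_nonneg q]
    linarith
  have htend : Filter.Tendsto (fun l : ℝ => l ^ r) (nhdsWithin N (Set.Ioi N)) (nhds (N ^ r)) :=
    ((Real.continuousAt_rpow_const N r (Or.inr hr0)).tendsto).mono_left nhdsWithin_le_nhds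
  exact ge_of_tendsto htend (eventually_nhdsWithin_of_forall fun l hl => key l hl)

/-- Half bound: `‖a^s q‖ ≤ ‖q a q‖ ^ s` for `s ∈ [0, 1/2]`. -/
lemma aux_half {a q : 𝔸} (ha : 0 ≤ a) (hq : IsIdempotentElem q) (hqsa : IsSelfAdjoint q)
    {s : ℝ} (hs0 : 0 ≤ s) (hs : s ≤ 1 / 2) :
    ‖cfc (fun u : ℝ => u ^ s) a * q‖ ≤ ‖q * a * q‖ ^ s := by
  have hsa : IsSelfAdjoint (cfc (fun u : ℝ => u ^ s) a) := cfc_predicate _ a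
  have hmul : cfc (fun u : ℝ => u ^ s) a * cfc (fun u : ℝ => u ^ s) a
      = cfc (fun u : ℝ => u ^ (2 * s)) a := by
    rw [← cfc_mul _ _ a ((Real.continuous_rpow_const hs0).continuousOn)
      ((Real.continuous_rpow_const hs0).continuousOn)]
    refine cfc_congr fun x hx => ?_
    have hx0 : 0 ≤ x := spectrum_nonneg_of_nonneg ha hx
    rcases hs0.eq_or_lt with rfl | hspos
    · simp [Real.rpow_zero]
    · rw [show (2:ℝ) * s = s + s by ring, Real.rpow_add' hx0 (by positivity)]
  have hsq : ‖cfc (fun u : ℝ => u ^ s) a * q‖ * ‖cfc (fun u : ℝ => u ^ s) a * q‖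
      = ‖q * cfc (fun u : ℝ => u ^ (2 * s)) a * q‖ := by
    calc ‖cfc (fun u : ℝ => u ^ s) a * q‖ * ‖cfc (fun u : ℝ => u ^ s) a * q‖
        = ‖star (cfc (fun u : ℝ => u ^ s) a * q) * (cfc (fun u : ℝ => u ^ s) a * q)‖ :=
          (CStarRing.norm_star_mul_self).symm
    _ = ‖q * cfc (fun u : ℝ => u ^ (2 * s)) a * q‖ := by
        rw [star_mul, hqsa.star_eq, hsa.star_eq, ← hmul]
        congr 1
        noncomm_ring
  have hkey : ‖q * cfc (fun u : ℝ => u ^ (2 * s)) a * q‖ ≤ ‖q * a * q‖ ^ (2 * s) :=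
    aux_key ha hq hqsa (by positivity) (by linarith)
  have hN0 : (0:ℝ) ≤ ‖q * a * q‖ := norm_nonneg _
  have h2 : ‖q * a * q‖ ^ (2 * s) = (‖q * a * q‖ ^ s) * (‖q * a * q‖ ^ s) := by
    rw [show (2:ℝ) * s = s + s by ring]
    rcases hs0.eq_or_lt with rfl | hspos
    · simp
    · exact Real.rpow_add' hN0 (by positivity)
  nlinarith [norm_nonneg (cfc (fun u : ℝ => u ^ s) a * q), Real.rpow_nonneg hN0 s,
    hsq, hkey, h2]

end Aux

/-- Let `P` be an orthogonal projection on a Hilbert space `H` and `A, B` positive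
semidefinite bounded self-adjoint operators. For any `s, t` with `0 ≤ s, t ≤ 1/2`,
`‖A^s (I − P) A^t‖ ≤ ‖A − B‖^(s+t) + ‖B^(1/2) (I − P) B^(1/2)‖^(s+t)`. -/
theorem proj_error_transfer {H : Type*} [NormedAddCommGroup H] [InnerProductSpace ℂ H]
    [CompleteSpace H] [TopologicalSpace.SeparableSpace H]
    (A B P : H →L[ℂ] H) (hA : A.IsPositive) (hB : B.IsPositive)
    (hP : IsIdempotentElem P) (hPsa : IsSelfAdjoint P)
    (s t : ℝ) (hs0 : 0 ≤ s) (hs : s ≤ 1 / 2) (ht0 : 0 ≤ t) (ht : t ≤ 1 / 2) :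
    ‖cfc (fun u : ℝ => u ^ s) A * (1 - P) * cfc (fun u : ℝ => u ^ t) A‖
      ≤ ‖A - B‖ ^ (s + t)
        + ‖cfc (fun u : ℝ => Real.sqrt u) B * (1 - P) * cfc (fun u : ℝ => Real.sqrt u) B‖
            ^ (s + t) := by
  have hA0 : 0 ≤ A := (ContinuousLinearMap.nonneg_iff_isPositive A).mpr hA
  have hB0 : 0 ≤ B := (ContinuousLinearMap.nonneg_iff_isPositive B).mpr hB
  have hAsa : IsSelfAdjoint A := hA.isSelfAdjoint
  have hBsa : IsSelfAdjoint B := hB.isSelfAdjoint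
  have hQ : IsIdempotentElem ((1 : H →L[ℂ] H) - P) := hP.one_sub
  have hQsa : IsSelfAdjoint ((1 : H →L[ℂ] H) - P) := (IsSelfAdjoint.one (R := H →L[ℂ] H)).sub hPsa
  have hQn : ‖(1 : H →L[ℂ] H) - P‖ ≤ 1 := aux_idem_norm_le_one hQ hQsa
  rcases (add_nonneg hs0 ht0).eq_or_lt with hst | hst
  · -- `s = t = 0`
    have hs' : s = 0 := by linarith
    have ht' : t = 0 := by linarith
    have h1 : cfc (fun u : ℝ => u ^ (0:ℝ)) A = 1 := by
      calc cfc (fun u : ℝ => u ^ (0:ℝ)) A = cfc (fun _ : ℝ => (1:ℝ)) A :=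
            cfc_congr fun x _ => by simp
      _ = 1 := cfc_const_one ℝ A hAsa
    rw [hs', ht', h1, one_mul, mul_one, add_zero, Real.rpow_zero, Real.rpow_zero]
    linarith
  · set As := cfc (fun u : ℝ => u ^ s) A with hAs_def
    set At := cfc (fun u : ℝ => u ^ t) A with hAt_def
    set Bh := cfc (fun u : ℝ => Real.sqrt u) B with hBh_def
    set N := ‖((1 : H →L[ℂ] H) - P) * A * (1 - P)‖ with hN_def
    have hN0 : (0:ℝ) ≤ N := norm_nonneg _
    have hAsQ : ‖As * (1 - P)‖ ≤ N ^ s := aux_half hA0 hQ hQsa hs0 hs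
    have hAtsa : IsSelfAdjoint At := cfc_predicate _ A
    have hQAt : ‖((1 : H →L[ℂ] H) - P) * At‖ ≤ N ^ t := by
      have h := aux_half hA0 hQ hQsa ht0 ht
      calc ‖((1 : H →L[ℂ] H) - P) * At‖ = ‖star (At * (1 - P))‖ := by
            rw [star_mul, hQsa.star_eq, hAtsa.star_eq]
      _ = ‖At * (1 - P)‖ := norm_star _
      _ ≤ N ^ t := h
    have hsplit : As * (1 - P) * At = (As * (1 - P)) * ((1 - P) * At) := by
      conv_lhs => rw [← hQ.eq]
      noncomm_ring
    have hmain : ‖As * (1 - P) * At‖ ≤ N ^ s * N ^ t := by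
      rw [hsplit]
      exact (norm_mul_le _ _).trans
        (mul_le_mul hAsQ hQAt (norm_nonneg _) (Real.rpow_nonneg hN0 _))
    have hNst : N ^ s * N ^ t = N ^ (s + t) := (Real.rpow_add' hN0 (by linarith)).symm
    have hBhsa : IsSelfAdjoint Bh := cfc_predicate _ B
    have hBB : Bh * Bh = B := by
      rw [hBh_def, ← cfc_mul _ _ B Real.continuous_sqrt.continuousOn
        Real.continuous_sqrt.continuousOn]
      calc cfc (fun u : ℝ => Real.sqrt u * Real.sqrt u) B = cfc (id : ℝ → ℝ) B :=
            cfc_congr fun x hx => Real.mul_self_sqrt (spectrum_nonneg_of_nonneg hB0 hx)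
      _ = B := cfc_id ℝ B hBsa
    have hQBQ : ‖((1 : H →L[ℂ] H) - P) * B * (1 - P)‖ = ‖Bh * (1 - P) * Bh‖ := by
      have e1 : ((1 : H →L[ℂ] H) - P) * B * (1 - P) = star (Bh * (1 - P)) * (Bh * (1 - P)) := by
        rw [star_mul, hQsa.star_eq, hBhsa.star_eq, ← hBB]
        noncomm_ring
      have e2 : (Bh * (1 - P)) * star (Bh * (1 - P)) = Bh * (1 - P) * Bh := by
        rw [star_mul, hQsa.star_eq, hBhsa.star_eq]
        have : (Bh * (1 - P)) * ((1 - P) * Bh) = Bh * (((1:H →L[ℂ] H) - P) * (1 - P)) * Bh := by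
          noncomm_ring
        rw [this, hQ.eq]
      calc ‖((1 : H →L[ℂ] H) - P) * B * (1 - P)‖
          = ‖star (Bh * (1 - P)) * (Bh * (1 - P))‖ := by rw [e1]
      _ = ‖Bh * (1 - P)‖ * ‖Bh * (1 - P)‖ := CStarRing.norm_star_mul_self
      _ = ‖(Bh * (1 - P)) * star (Bh * (1 - P))‖ := CStarRing.norm_self_mul_star.symm
      _ = ‖Bh * (1 - P) * Bh‖ := by rw [e2]
    have hNle : N ≤ ‖A - B‖ + ‖Bh * (1 - P) * Bh‖ := by
      have hdecomp : ((1 : H →L[ℂ] H) - P) * A * (1 - P)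
          = (1 - P) * (A - B) * (1 - P) + (1 - P) * B * (1 - P) := by noncomm_ring
      have h1 : ‖((1 : H →L[ℂ] H) - P) * (A - B) * (1 - P)‖ ≤ ‖A - B‖ := by
        have i1 := norm_mul_le (((1 : H →L[ℂ] H) - P) * (A - B)) (1 - P)
        have i2 := norm_mul_le ((1 : H →L[ℂ] H) - P) (A - B)
        have := norm_nonneg (A - B)
        have := norm_nonneg ((1 : H →L[ℂ] H) - P)
        have := norm_nonneg (((1 : H →L[ℂ] H) - P) * (A - B))
        nlinarith
      calc N = ‖((1:H →L[ℂ] H) - P) * (A - B) * (1 - P) + (1 - P) * B * (1 - P)‖ := by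
            rw [hN_def, hdecomp]
      _ ≤ ‖((1:H →L[ℂ] H) - P) * (A - B) * (1 - P)‖ + ‖((1:H →L[ℂ] H) - P) * B * (1 - P)‖ :=
            norm_add_le _ _
      _ ≤ ‖A - B‖ + ‖Bh * (1 - P) * Bh‖ := by rw [hQBQ]; linarith
    have hfin : N ^ (s + t) ≤ (‖A - B‖ + ‖Bh * (1 - P) * Bh‖) ^ (s + t) :=
      Real.rpow_le_rpow hN0 hNle (by linarith)
    have hsub : (‖A - B‖ + ‖Bh * (1 - P) * Bh‖) ^ (s + t)
        ≤ ‖A - B‖ ^ (s + t) + ‖Bh * (1 - P) * Bh‖ ^ (s + t) := by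
      have h := NNReal.rpow_add_le_add_rpow (p := s + t) ‖A - B‖₊ ‖Bh * (1 - P) * Bh‖₊
        (by linarith) (by linarith)
      have h' := NNReal.coe_le_coe.2 h
      simpa [NNReal.coe_rpow, NNReal.coe_add, coe_nnnorm] using h'
    calc ‖As * (1 - P) * At‖ ≤ N ^ s * N ^ t := hmain
    _ = N ^ (s + t) := hNst
    _ ≤ (‖A - B‖ + ‖Bh * (1 - P) * Bh‖) ^ (s + t) := hfin
    _ ≤ ‖A - B‖ ^ (s + t) + ‖Bh * (1 - P) * Bh‖ ^ (s + t) := hsub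
end

section
/- Let W : H₁ → H₂ be a bounded operator between Hilbert spaces and P the orthogonal projection onto the closure of the range of W*. Then for every λ > 0, I − P ≼ λ (W*W + λI)^{-1} in the Loewner order. -/
/-! Because `ker W = (range W*)ᗮ`, the operator `A = W*W + λ` acts as `λ` on the range of `I - P`
and commutes with `P`. Hence `λ A⁻¹ - (I - P) = λ P A⁻¹ P`, which is positive since `A⁻¹` is. -/

open ContinuousLinearMap

section

variable {R 𝕜 : Type*} [Field 𝕜] [Ring R] [Algebra 𝕜 R]

theorem Ring.inverse_mul_eq_inv_smul {a q : R} {c : 𝕜} (ha : IsUnit a) (hc : c ≠ 0)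
    (haq : a * q = c • q) : Ring.inverse a * q = c⁻¹ • q := by
  calc Ring.inverse a * q = c⁻¹ • (Ring.inverse a * (c • q)) := by
        rw [mul_smul_comm, smul_smul, inv_mul_cancel₀ hc, one_smul]
    _ = c⁻¹ • q := by rw [← haq, Ring.inverse_mul_cancel_left a q ha]

theorem Ring.mul_inverse_eq_inv_smul {a q : R} {c : 𝕜} (ha : IsUnit a) (hc : c ≠ 0)
    (hqa : q * a = c • q) : q * Ring.inverse a = c⁻¹ • q := by
  calc q * Ring.inverse a = c⁻¹ • ((c • q) * Ring.inverse a) := by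
        rw [smul_mul_assoc, smul_smul, inv_mul_cancel₀ hc, one_smul]
    _ = c⁻¹ • q := by rw [← hqa, Ring.mul_inverse_cancel_right a q ha]

theorem smul_ringInverse_sub_eq_smul_mul_mul {a p : R} {c : 𝕜} (ha : IsUnit a) (hc : c ≠ 0)
    (hp : IsIdempotentElem p) (hap : a * (1 - p) = c • (1 - p))
    (hpa : (1 - p) * a = c • (1 - p)) :
    c • Ring.inverse a - (1 - p) = c • (p * Ring.inverse a * p) := by
  have h1 := Ring.inverse_mul_eq_inv_smul ha hc hap
  have h2 := Ring.mul_inverse_eq_inv_smul ha hc hpa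
  set b := Ring.inverse a
  have hpbp : p * b * p = b - c⁻¹ • (1 - p) := by
    calc p * b * p = (1 - (1 - p)) * b * (1 - (1 - p)) := by simp
      _ = b - b * (1 - p) - (1 - p) * b + (1 - p) * b * (1 - p) := by noncomm_ring
      _ = b - c⁻¹ • (1 - p) := by
        rw [h1, h2, smul_mul_assoc, hp.one_sub.eq]; abel
  rw [hpbp, smul_sub, smul_smul, mul_inv_cancel₀ hc, one_smul]

end

section

variable {𝕜 E F : Type*} [RCLike 𝕜] [NormedAddCommGroup E] [InnerProductSpace 𝕜 E]
  [NormedAddCommGroup F] [InnerProductSpace 𝕜 F] [CompleteSpace E] [CompleteSpace F]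

theorem ContinuousLinearMap.comp_one_sub_starProjection_eq_zero (T : E →L[𝕜] F)
    (K : Submodule 𝕜 E) [K.HasOrthogonalProjection]
    (hK : LinearMap.range (adjoint T : F →ₗ[𝕜] E) ≤ K) :
    T ∘L (1 - K.starProjection) = 0 := by
  have hker : Kᗮ ≤ LinearMap.ker (T : E →ₗ[𝕜] F) := by
    simpa using (Submodule.orthogonal_le hK).trans (orthogonal_range (adjoint T)).le
  ext x
  simpa [← Submodule.starProjection_orthogonal'] using
    hker (Submodule.starProjection_apply_mem Kᗮ x)

end

theorem proj_complement_le_resolvent_general {H₁ H₂ : Type*}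
    [NormedAddCommGroup H₁] [InnerProductSpace ℂ H₁] [CompleteSpace H₁]
    [NormedAddCommGroup H₂] [InnerProductSpace ℂ H₂] [CompleteSpace H₂]
    (W : H₁ →L[ℂ] H₂) (l : ℝ) (hl : 0 < l)
    (K : Submodule ℂ H₁)
    (hK : K = (LinearMap.range (ContinuousLinearMap.adjoint W : H₂ →ₗ[ℂ] H₁)).topologicalClosure)
    [CompleteSpace K] :
    ((l : ℂ) • Ring.inverse ((ContinuousLinearMap.adjoint W).comp W + (l : ℂ) • (1 : H₁ →L[ℂ] H₁))
      - (1 - K.subtypeL.comp K.orthogonalProjectionOnto)).IsPositive := by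
  set A := (adjoint W).comp W + (l : ℂ) • (1 : H₁ →L[ℂ] H₁)
  set P := K.starProjection
  have hP : IsStarProjection P := isStarProjection_starProjection
  have hA : IsStrictlyPositive A := by
    have hl1 : IsStrictlyPositive ((l : ℂ) • (1 : H₁ →L[ℂ] H₁)) := by
      simpa [Algebra.algebraMap_eq_smul_one] using
        isStrictlyPositive_algebraMap (A := H₁ →L[ℂ] H₁) hl
    exact hl1.nonneg_add ((nonneg_iff_isPositive _).2 (isPositive_adjoint_comp_self W))
  have hWq : W ∘L (1 - P) = 0 :=
    W.comp_one_sub_starProjection_eq_zero K (hK ▸ Submodule.le_topologicalClosure _)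
  have hqW : (1 - P) ∘L adjoint W = 0 := by
    simpa [adjoint_comp, adjoint_one, hP.isSelfAdjoint.adjoint_eq] using congrArg adjoint hWq
  have hAq : A * (1 - P) = (l : ℂ) • (1 - P) := by
    rw [add_mul, mul_def, comp_assoc, hWq, comp_zero, zero_add, smul_mul_assoc, one_mul]
  have hqA : (1 - P) * A = (l : ℂ) • (1 - P) := by
    rw [mul_add, mul_def, ← comp_assoc, hqW, zero_comp, zero_add, mul_smul_comm, mul_one]
  rw [← nonneg_iff_isPositive, show K.subtypeL.comp K.orthogonalProjectionOnto = P from rfl,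
    smul_ringInverse_sub_eq_smul_mul_mul hA.isUnit (by exact_mod_cast hl.ne')
      hP.isIdempotentElem hAq hqA, Complex.coe_smul]
  refine smul_nonneg hl.le ?_
  simpa [hP.isSelfAdjoint.star_eq] using
    star_left_conjugate_nonneg hA.ringInverse.nonneg P

/-- Let `W : H₁ → H₂` be a bounded operator between Hilbert spaces and `P` the orthogonal
projection onto the closure of the range of `W*`. Then for every `λ > 0`,
`I − P ≼ λ (W*W + λ I)⁻¹` in the Loewner order. -/
theorem proj_complement_le_resolvent {H₁ H₂ : Type*}
    [NormedAddCommGroup H₁] [InnerProductSpace ℂ H₁] [CompleteSpace H₁] [TopologicalSpace.SeparableSpace H₁]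
    [NormedAddCommGroup H₂] [InnerProductSpace ℂ H₂] [CompleteSpace H₂] [TopologicalSpace.SeparableSpace H₂]
    (W : H₁ →L[ℂ] H₂) (l : ℝ) (hl : 0 < l)
    (K : Submodule ℂ H₁)
    (hK : K = (LinearMap.range (ContinuousLinearMap.adjoint W : H₂ →ₗ[ℂ] H₁)).topologicalClosure)
    [CompleteSpace K] :
    ((l : ℂ) • Ring.inverse ((ContinuousLinearMap.adjoint W).comp W + (l : ℂ) • (1 : H₁ →L[ℂ] H₁))
      - (1 - K.subtypeL.comp K.orthogonalProjectionOnto)).IsPositive :=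
  proj_complement_le_resolvent_general W l hl K hK
end

section
/- Let T be a positive self-adjoint bounded operator on a Hilbert space and P an orthogonal projection such that I − P ≼ λ(W*W + λI)^{-1} for some bounded operator W with T₁ := T, and suppose ‖(T+λI)^{-1/2}(T − W*W)(T+λI)^{-1/2}‖ ≤ c < 1. Then ‖(I − P) T^{1/2}‖² ≤ (1−c)^{-1} λ. -/
/-!
Write `S = T^(1/2)`, `Q = (T + λ)^(1/2)` and `N = (W*W + λ)⁻¹`. Conjugating `I - P ≤ λ N` by `S`
gives `‖(I - P) S‖² = ‖S (I - P) S‖ ≤ λ ‖S N S‖`. Since `S = C Q = Q C` with the contraction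
`C = T^(1/2) (T + λ)^(-1/2)`, we get `‖S N S‖ ≤ ‖Q N Q‖`, and `Q N Q = (I - D)⁻¹` for
`D = Q⁻¹ (T - W*W) Q⁻¹`, so the Neumann series bounds it by `(1 - c)⁻¹`.
-/

open Ring

theorem norm_inverse_one_sub_le {R : Type*} [NormedRing R] [HasSummableGeomSeries R]
    (h1 : ‖(1 : R)‖ ≤ 1) {x : R} {c : ℝ} (hx : ‖x‖ ≤ c) (hc : c < 1) :
    ‖(1 - x)⁻¹ʳ‖ ≤ (1 - c)⁻¹ := by
  have hx1 : ‖x‖ < 1 := hx.trans_lt hc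
  rw [← geom_series_eq_inverse x hx1]
  calc ‖∑' n, x ^ n‖ ≤ ‖(1 : R)‖ - 1 + (1 - ‖x‖)⁻¹ := tsum_geometric_le_of_norm_lt_one x hx1
    _ ≤ (1 - c)⁻¹ := by
      have : (1 - ‖x‖)⁻¹ ≤ (1 - c)⁻¹ := by gcongr
      linarith

section CStarRing

variable {A : Type*} [NormedRing A] [StarRing A] [CStarRing A]

theorem CStarRing.norm_one_le : ‖(1 : A)‖ ≤ 1 := by
  rcases subsingleton_or_nontrivial A with _ | _
  · simp [Subsingleton.elim (1 : A) 0]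
  · exact CStarRing.norm_one.le

theorem IsStarProjection.norm_mul_sq {p s : A} (hp : IsStarProjection p) (hs : IsSelfAdjoint s) :
    ‖p * s‖ ^ 2 = ‖s * p * s‖ := by
  rw [sq, ← CStarRing.norm_star_mul_self, star_mul, hp.isSelfAdjoint.star_eq, hs.star_eq,
    mul_assoc s, ← mul_assoc p, hp.isIdempotentElem.eq, mul_assoc]

end CStarRing

section CStarAlgebra

variable {A : Type*} [CStarAlgebra A] [PartialOrder A] [StarOrderedRing A] {a : A} {l : ℝ}

theorem cfc_sqrt_add_mul_self (ha : 0 ≤ a) (hl : 0 ≤ l) :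
    cfc (fun u : ℝ => √(u + l)) a * cfc (fun u : ℝ => √(u + l)) a = a + algebraMap ℝ A l := by
  rw [← cfc_mul .., cfc_congr (g := fun u : ℝ => u + l), cfc_add_const l (fun u : ℝ => u) a,
    cfc_id' ℝ a]
  exact fun u hu => Real.mul_self_sqrt (by linarith [spectrum_nonneg_of_nonneg ha hu])

theorem isUnit_cfc_sqrt_add (ha : 0 ≤ a) (hl : 0 < l) :
    IsUnit (cfc (fun u : ℝ => √(u + l)) a) :=
  (isUnit_cfc_iff _ a).2 fun u hu => by
    have := spectrum_nonneg_of_nonneg ha hu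
    positivity

theorem inverse_one_sub_conj_inv_sqrt_add (ha : 0 ≤ a) (hl : 0 < l) (b : A) :
    (1 - cfc (fun u : ℝ => (√(u + l))⁻¹) a * (a - b) * cfc (fun u : ℝ => (√(u + l))⁻¹) a)⁻¹ʳ
      = cfc (fun u : ℝ => √(u + l)) a * (b + algebraMap ℝ A l)⁻¹ʳ
        * cfc (fun u : ℝ => √(u + l)) a := by
  set q := cfc (fun u : ℝ => √(u + l)) a
  have hq : IsUnit q := isUnit_cfc_sqrt_add ha hl
  rw [cfc_inv _ _ fun u hu => (isUnit_cfc_iff _ a).1 hq u hu]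
  have hconj : q⁻¹ʳ * (a + algebraMap ℝ A l) * q⁻¹ʳ = 1 := by
    rw [← cfc_sqrt_add_mul_self ha hl.le, ← mul_assoc, inverse_mul_cancel _ hq, one_mul,
      mul_inverse_cancel _ hq]
  have hone_sub : 1 - q⁻¹ʳ * (a - b) * q⁻¹ʳ = q⁻¹ʳ * (b + algebraMap ℝ A l) * q⁻¹ʳ := by
    rw [← hconj, ← sub_mul, ← mul_sub]
    congr 2
    abel
  rw [hone_sub, inverse_mul (.inr hq.ringInverse), inverse_mul (.inl hq.ringInverse),
    inverse_inverse hq, mul_assoc]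

theorem norm_cfc_sqrt_conj_le (ha : 0 ≤ a) (hl : 0 < l) (x : A) :
    ‖cfc (fun u : ℝ => √u) a * x * cfc (fun u : ℝ => √u) a‖
      ≤ ‖cfc (fun u : ℝ => √(u + l)) a * x * cfc (fun u : ℝ => √(u + l)) a‖ := by
  set q := cfc (fun u : ℝ => √(u + l)) a
  set r := cfc (fun u : ℝ => √u / √(u + l)) a
  have hpos : ∀ u ∈ spectrum ℝ a, 0 < √(u + l) := fun u hu => by
    have := spectrum_nonneg_of_nonneg ha hu
    positivity
  have hr_cont : ContinuousOn (fun u : ℝ => √u / √(u + l)) (spectrum ℝ a) :=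
    ContinuousOn.div (by fun_prop) (by fun_prop) fun u hu => (hpos u hu).ne'
  have hrq : cfc (fun u : ℝ => √u) a = r * q := by
    rw [← cfc_mul ..]
    exact cfc_congr fun u hu => (div_mul_cancel₀ _ (hpos u hu).ne').symm
  have hqr : cfc (fun u : ℝ => √u) a = q * r := hrq.trans (cfc_commute_cfc ..).eq
  have hr : ‖r‖ ≤ 1 := norm_cfc_le zero_le_one fun u hu => by
    have := spectrum_nonneg_of_nonneg ha hu
    rw [Real.norm_of_nonneg (by positivity)]
    exact div_le_one_of_le₀ (Real.sqrt_le_sqrt (by linarith)) (hpos u hu).le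
  calc ‖cfc (fun u : ℝ => √u) a * x * cfc (fun u : ℝ => √u) a‖ = ‖r * (q * x * q) * r‖ := by
        nth_rw 1 [hrq]; rw [hqr]; simp only [mul_assoc]
    _ ≤ ‖r‖ * ‖q * x * q‖ * ‖r‖ := norm_mul₃_le
    _ ≤ 1 * ‖q * x * q‖ * 1 := by gcongr
    _ = ‖q * x * q‖ := by ring

end CStarAlgebra

open ContinuousLinearMap in
theorem proj_error_neumann_bound_general {H K : Type*}
    [NormedAddCommGroup H] [InnerProductSpace ℂ H] [CompleteSpace H]
    [NormedAddCommGroup K] [InnerProductSpace ℂ K] [CompleteSpace K]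
    (T P : H →L[ℂ] H) (W : H →L[ℂ] K)
    (hT : T.IsPositive) (hP : IsIdempotentElem P) (hPsa : IsSelfAdjoint P)
    (l : ℝ) (hl : 0 < l) (c : ℝ) (hc : c < 1)
    (hproj : ((l : ℂ) • Ring.inverse ((adjoint W).comp W + (l : ℂ) • (1 : H →L[ℂ] H))
        - (1 - P)).IsPositive)
    (hnorm : ‖cfc (fun u : ℝ => (Real.sqrt (u + l))⁻¹) T
        * (T - (adjoint W).comp W)
        * cfc (fun u : ℝ => (Real.sqrt (u + l))⁻¹) T‖ ≤ c) :
    ‖(1 - P) * cfc (fun u : ℝ => Real.sqrt u) T‖ ^ 2 ≤ (1 - c)⁻¹ * l := by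
  have hT0 : 0 ≤ T := (nonneg_iff_isPositive T).2 hT
  have hscalar : (l : ℂ) • (1 : H →L[ℂ] H) = algebraMap ℝ (H →L[ℂ] H) l := by
    rw [Algebra.algebraMap_eq_smul_one, Complex.coe_smul]
  set S := cfc (fun u : ℝ => √u) T
  set Q := cfc (fun u : ℝ => √(u + l)) T
  set N := ((adjoint W).comp W + (l : ℂ) • (1 : H →L[ℂ] H))⁻¹ʳ with hN
  have hle : 1 - P ≤ l • N := by
    simpa [sub_nonneg, Complex.coe_smul] using (nonneg_iff_isPositive _).2 hproj
  have hQNQ : ‖Q * N * Q‖ ≤ (1 - c)⁻¹ := by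
    rw [hN, hscalar, ← inverse_one_sub_conj_inv_sqrt_add hT0 hl]
    exact norm_inverse_one_sub_le CStarRing.norm_one_le hnorm hc
  have hS : IsSelfAdjoint S := IsSelfAdjoint.cfc
  have hproj1 : IsStarProjection (1 - P) := IsStarProjection.one_sub ⟨hP, hPsa⟩
  calc ‖(1 - P) * S‖ ^ 2 = ‖S * (1 - P) * S‖ := hproj1.norm_mul_sq hS
    _ ≤ ‖S * (l • N) * S‖ := CStarAlgebra.norm_le_norm_of_nonneg_of_le
        (hS.conjugate_nonneg hproj1.nonneg) (hS.conjugate_le_conjugate hle)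
    _ = l * ‖S * N * S‖ := by
        rw [mul_smul_comm, smul_mul_assoc, norm_smul, Real.norm_of_nonneg hl.le]
    _ ≤ l * ‖Q * N * Q‖ := by gcongr; exact norm_cfc_sqrt_conj_le hT0 hl N
    _ ≤ l * (1 - c)⁻¹ := by gcongr
    _ = (1 - c)⁻¹ * l := mul_comm _ _

open ContinuousLinearMap in
/-- Let `T` be a positive self-adjoint bounded operator, `P` an orthogonal projection and `W`
a bounded operator such that `I − P ≼ λ (W*W + λI)⁻¹`, and suppose
`‖(T+λI)^(-1/2) (T − W*W) (T+λI)^(-1/2)‖ ≤ c < 1`. Then `‖(I − P) T^(1/2)‖² ≤ (1−c)⁻¹ λ`. -/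
theorem proj_error_neumann_bound {H K : Type*}
    [NormedAddCommGroup H] [InnerProductSpace ℂ H] [CompleteSpace H]
    [TopologicalSpace.SeparableSpace H]
    [NormedAddCommGroup K] [InnerProductSpace ℂ K] [CompleteSpace K]
    (T P : H →L[ℂ] H) (W : H →L[ℂ] K)
    (hT : T.IsPositive) (hP : IsIdempotentElem P) (hPsa : IsSelfAdjoint P)
    (l : ℝ) (hl : 0 < l) (c : ℝ) (hc : c < 1)
    (hproj : ((l : ℂ) • Ring.inverse ((adjoint W).comp W + (l : ℂ) • (1 : H →L[ℂ] H))
        - (1 - P)).IsPositive)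
    (hnorm : ‖cfc (fun u : ℝ => (Real.sqrt (u + l))⁻¹) T
        * (T - (adjoint W).comp W)
        * cfc (fun u : ℝ => (Real.sqrt (u + l))⁻¹) T‖ ≤ c) :
    ‖(1 - P) * cfc (fun u : ℝ => Real.sqrt u) T‖ ^ 2 ≤ (1 - c)⁻¹ * l :=
  proj_error_neumann_bound_general T P W hT hP hPsa l hl c hc hproj hnorm
end

section
/- Let G : H → H be a bounded self-adjoint positive compact operator defined by spectral calculus from g_λ on a compact operator C = P T_x P where P is an orthogonal projection and T_x is positive self-adjoint with ‖T_x‖ ≤ κ². Then ‖(C+λI)^{1/2} g_λ(C) P (T_x+λI)^{1/2}‖ ≤ sup_{u∈[0,κ²]} |(u+λ)g_λ(u)|, where g_λ is any bounded Borel function on [0,κ²]. -/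
set_option maxHeartbeats 1000000


/-- Let `P` be an orthogonal projection, `T_x` positive self-adjoint with `‖T_x‖ ≤ κ²`, and
`C = P T_x P`. For `λ > 0` and any continuous `g_λ`,
`‖(C+λI)^(1/2) g_λ(C) P (T_x+λI)^(1/2)‖ ≤ sup_{u ∈ [0,κ²]} |(u+λ) g_λ(u)|`. -/
theorem filtered_projected_bound {H : Type*} [NormedAddCommGroup H] [InnerProductSpace ℂ H]
    [CompleteSpace H] [TopologicalSpace.SeparableSpace H]
    (Tx P : H →L[ℂ] H) (hT : Tx.IsPositive)
    (hP : IsIdempotentElem P) (hPsa : IsSelfAdjoint P)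
    (κ : ℝ) (hκ : ‖Tx‖ ≤ κ ^ 2) (l : ℝ) (hl : 0 < l)
    (g : ℝ → ℝ) (hg : Continuous g) :
    ‖cfc (fun u : ℝ => Real.sqrt (u + l)) (P * Tx * P) * cfc g (P * Tx * P) * P
        * cfc (fun u : ℝ => Real.sqrt (u + l)) Tx‖
      ≤ sSup ((fun u : ℝ => |(u + l) * g u|) '' Set.Icc 0 (κ ^ 2)) := by
  set f : ℝ → ℝ := fun u => Real.sqrt (u + l) with hf_def
  have hf_cont : Continuous f := Real.continuous_sqrt.comp (continuous_id.add continuous_const)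
  set A : H →L[ℂ] H := P * Tx * P with hA_def
  have hTsa : IsSelfAdjoint Tx := hT.isSelfAdjoint
  have hT0 : (0 : H →L[ℂ] H) ≤ Tx := (ContinuousLinearMap.nonneg_iff_isPositive Tx).mpr hT
  have hA_sa : IsSelfAdjoint A := by
    simp only [hA_def, IsSelfAdjoint, star_mul, hPsa.star_eq, hTsa.star_eq, mul_assoc]
  have hA0 : (0 : H →L[ℂ] H) ≤ A := by
    have := star_left_conjugate_nonneg hT0 P
    rwa [hPsa.star_eq] at this
  -- norm of P is at most 1
  have hPnorm : ‖P‖ ≤ 1 := by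
    have h1 : ‖P‖ * ‖P‖ = ‖P‖ := by
      conv_rhs => rw [← hP.eq]
      rw [← CStarRing.norm_star_mul_self (x := P), hPsa.star_eq]
    rcases eq_or_lt_of_le (norm_nonneg P) with h | h
    · simp [← h]
    · nlinarith
  have hκ0 : (0:ℝ) ≤ κ ^ 2 := (norm_nonneg Tx).trans hκ
  have hAnorm : ‖A‖ ≤ κ ^ 2 := by
    calc ‖P * Tx * P‖ ≤ ‖P * Tx‖ * ‖P‖ := norm_mul_le _ _
      _ ≤ ‖P‖ * ‖Tx‖ * ‖P‖ := by
          gcongr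
          exact norm_mul_le _ _
      _ ≤ 1 * (κ ^ 2) * 1 := by
          apply mul_le_mul (mul_le_mul hPnorm hκ (norm_nonneg _) zero_le_one) hPnorm
            (norm_nonneg _)
          positivity
      _ = κ ^ 2 := by ring
  have hσA : spectrum ℝ A ⊆ Set.Icc 0 (κ ^ 2) := by
    intro x hx
    refine ⟨spectrum_nonneg_of_nonneg hA0 hx, ?_⟩
    have h1 : A ≤ algebraMap ℝ (H →L[ℂ] H) ‖A‖ :=
      (CStarAlgebra.norm_le_iff_le_algebraMap A (norm_nonneg A) hA0).mp le_rfl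
    have h2 := (le_algebraMap_iff_spectrum_le (a := A) hA_sa).mp h1
    exact (h2 x hx).trans hAnorm
  -- the supremum
  set M : ℝ := sSup ((fun u : ℝ => |(u + l) * g u|) '' Set.Icc 0 (κ ^ 2)) with hM_def
  have hbdd : BddAbove ((fun u : ℝ => |(u + l) * g u|) '' Set.Icc 0 (κ ^ 2)) :=
    (isCompact_Icc.image (((continuous_id.add continuous_const).mul hg).abs)).bddAbove
  have hM0 : 0 ≤ M := by
    refine le_trans (abs_nonneg ((0 + l) * g 0)) (le_csSup hbdd ⟨0, ?_, rfl⟩)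
    exact ⟨le_refl 0, hκ0⟩
  have hMval : ∀ x ∈ spectrum ℝ A, |(x + l) * g x| ≤ M := fun x hx =>
    le_csSup hbdd ⟨x, hσA hx, rfl⟩
  set C' : H →L[ℂ] H := algebraMap ℝ (H →L[ℂ] H) l with hC'
  have hFAsa : IsSelfAdjoint (cfc f A) := cfc_predicate f A
  have hGsa : IsSelfAdjoint (cfc g A) := cfc_predicate g A
  have hfTsa : IsSelfAdjoint (cfc f Tx) := cfc_predicate f Tx
  -- fT * fT = Tx + C'
  have hfT2 : cfc f Tx * cfc f Tx = Tx + C' := by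
    rw [← cfc_mul f f Tx hf_cont.continuousOn hf_cont.continuousOn]
    have h1 : cfc (fun u => f u * f u) Tx = cfc (fun u : ℝ => u + l) Tx := by
      apply cfc_congr
      intro u hu
      have hu0 : 0 ≤ u := spectrum_nonneg_of_nonneg hT0 hu
      exact Real.mul_self_sqrt (by linarith : (0:ℝ) ≤ u + l)
    have h2 := cfc_add_const l (fun u : ℝ => u) Tx continuousOn_id hTsa
    rw [h1]
    simpa [cfc_id' ℝ Tx] using h2
  -- P ≤ 1
  have h1P : (0 : H →L[ℂ] H) ≤ 1 - P := by
    have h := star_mul_self_nonneg (1 - P)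
    have he : (1 - P) * (1 - P) = 1 - P := by
      simp only [mul_sub, sub_mul, one_mul, mul_one, hP.eq]
      abel
    rwa [star_sub, star_one, hPsa.star_eq, he] at h
  -- C' * P ≤ C'
  have hstar : star (algebraMap ℝ (H →L[ℂ] H) (Real.sqrt l))
      = algebraMap ℝ (H →L[ℂ] H) (Real.sqrt l) :=
    (IsSelfAdjoint.all (Real.sqrt l)).algebraMap _ |>.star_eq
  have hCP : C' * P ≤ C' := by
    have hgoal : C' - C' * P = C' * (1 - P) := by rw [mul_sub, mul_one]
    rw [← sub_nonneg, hgoal]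
    have h := star_left_conjugate_nonneg h1P (algebraMap ℝ (H →L[ℂ] H) (Real.sqrt l))
    rwa [hstar, mul_assoc, ← Algebra.commutes (Real.sqrt l) (1 - P), ← mul_assoc, ← map_mul,
      Real.mul_self_sqrt hl.le] at h
  -- A + C' = cfc (u + l) A
  have hAC : A + C' = cfc (fun u : ℝ => u + l) A := by
    have h2 := cfc_add_const l (fun u : ℝ => u) A continuousOn_id hA_sa
    simpa [cfc_id' ℝ A] using h2.symm
  -- the product expression
  set S : H →L[ℂ] H := cfc f A * cfc g A * P * cfc f Tx with hS
  have hstarS : star S = cfc f Tx * P * cfc g A * cfc f A := by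
    simp only [hS, star_mul, hFAsa.star_eq, hGsa.star_eq, hfTsa.star_eq, hPsa.star_eq, mul_assoc]
  have hmid : P * (Tx + C') * P = A + C' * P := by
    rw [mul_add, add_mul, hC']
    rw [← Algebra.commutes l P, mul_assoc _ P P, hP.eq]
  have hSS : S * star S = star (cfc g A * cfc f A) * (A + C' * P) * (cfc g A * cfc f A) := by
    rw [hstarS, hS, star_mul, hFAsa.star_eq, hGsa.star_eq, ← hmid, ← hfT2]
    simp only [mul_assoc]
  -- conjugation inequality
  have hSSle : S * star S ≤ star (cfc g A * cfc f A) * (A + C') * (cfc g A * cfc f A) := by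
    rw [hSS]
    exact star_left_conjugate_le_conjugate (by rw [add_le_add_iff_left]; exact hCP) _
  -- identify the RHS as a cfc
  have hRHS : star (cfc g A * cfc f A) * (A + C') * (cfc g A * cfc f A)
      = cfc (fun u : ℝ => ((u + l) * g u) ^ 2) A := by
    rw [star_mul, hFAsa.star_eq, hGsa.star_eq, hAC]
    simp only [mul_assoc]
    rw [← cfc_mul g f A hg.continuousOn hf_cont.continuousOn]
    rw [← cfc_mul (fun u : ℝ => u + l) (fun x => g x * f x) A
      ((continuous_id.add continuous_const).continuousOn) ((hg.mul hf_cont).continuousOn)]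
    rw [← cfc_mul g (fun x => (x + l) * (g x * f x)) A hg.continuousOn
      (((continuous_id.add continuous_const).mul (hg.mul hf_cont)).continuousOn)]
    rw [← cfc_mul f (fun x => g x * ((x + l) * (g x * f x))) A hf_cont.continuousOn
      ((hg.mul ((continuous_id.add continuous_const).mul (hg.mul hf_cont))).continuousOn)]
    apply cfc_congr
    intro u hu
    have hu0 : 0 ≤ u := spectrum_nonneg_of_nonneg hA0 hu
    have hs : Real.sqrt (u + l) * Real.sqrt (u + l) = u + l :=
      Real.mul_self_sqrt (by linarith)
    simp only [hf_def]
    linear_combination ((u + l) * g u ^ 2) * hs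
  -- norm bound on the cfc
  have hnormcfc : ‖cfc (fun u : ℝ => ((u + l) * g u) ^ 2) A‖ ≤ M ^ 2 := by
    apply norm_cfc_le (by positivity)
    intro x hx
    have h1 : |(x + l) * g x| ≤ M := hMval x hx
    calc ‖((x + l) * g x) ^ 2‖ = |(x + l) * g x| ^ 2 := by
          rw [Real.norm_eq_abs, abs_of_nonneg (sq_nonneg _), sq_abs]
      _ ≤ M ^ 2 := by nlinarith [abs_nonneg ((x + l) * g x)]
  -- conclude
  have hSS0 : (0 : H →L[ℂ] H) ≤ S * star S := by
    simpa using star_mul_self_nonneg (star S)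
  have hnormSS : ‖S * star S‖ ≤ M ^ 2 := by
    calc ‖S * star S‖ ≤ ‖cfc (fun u : ℝ => ((u + l) * g u) ^ 2) A‖ := by
          apply CStarAlgebra.norm_le_norm_of_nonneg_of_le hSS0
          rw [← hRHS]
          exact hSSle
      _ ≤ M ^ 2 := hnormcfc
  have hfinal : ‖S‖ * ‖S‖ ≤ M ^ 2 := by
    rw [← CStarRing.norm_self_mul_star]
    exact hnormSS
  nlinarith [norm_nonneg S, hfinal]
end

section
/- Let T and T_x be positive self-adjoint bounded operators on a separable Hilbert space H, λ > 0, and set Δ₂ := ‖(T+λ)^{-1/2}(T − T_x)‖, viewed as a bound. Then for any ω ∈ H, ‖(T_x+λ)^{-1/2} T_x (I−P) ω‖_H ≤ ‖(T+λ)^{1/2}(T_x+λ)^{-1/2}‖ · (Δ₂ ‖(I−P)ω‖ + ‖T^{1/2}(I−P)ω‖), where P is an orthogonal projection. -/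
/-!
Since `(T+λ)^{1/2} (T+λ)^{-1/2} = 1`, the vector `(T_x+λ)^{-1/2} T_x v` equals
`[(T_x+λ)^{-1/2} (T+λ)^{1/2}] (T+λ)^{-1/2} T_x v`, and the bracketed operator is the adjoint of
`(T+λ)^{1/2} (T_x+λ)^{-1/2}`, so it has the same norm. Writing `T_x = T - (T - T_x)` splits
`(T+λ)^{-1/2} T_x v` into `(T+λ)^{-1/2} T v`, which is `g(T) T^{1/2} v` with
`g(u) = √u / √(u+λ) ≤ 1`, and a term bounded by `Δ₂ ‖v‖`.
-/

section CStarAlgebra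

variable {A : Type*} [CStarAlgebra A]

lemma IsSelfAdjoint.norm_mul_comm_s14 {a b : A} (ha : IsSelfAdjoint a) (hb : IsSelfAdjoint b) :
    ‖a * b‖ = ‖b * a‖ := by
  rw [← norm_star (b * a), star_mul, ha.star_eq, hb.star_eq]

lemma norm_cfc_sqrt_mul_inv_sqrt_add_le_one (a : A) {l : ℝ} (hl : 0 ≤ l) :
    ‖cfc (fun u : ℝ => √u * (√(u + l))⁻¹) a‖ ≤ 1 := by
  refine norm_cfc_le zero_le_one fun u _ => ?_
  rw [Real.norm_eq_abs, abs_of_nonneg (by positivity), ← div_eq_mul_inv]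
  exact div_le_one_of_le₀ (Real.sqrt_le_sqrt (by linarith)) (Real.sqrt_nonneg _)

variable [PartialOrder A] [StarOrderedRing A] {a : A} {l : ℝ}

lemma sqrt_add_ne_zero_of_mem_spectrum (ha : 0 ≤ a) (hl : 0 < l) :
    ∀ u ∈ spectrum ℝ a, √(u + l) ≠ 0 := fun _ hu =>
  (Real.sqrt_pos.mpr (by linarith [spectrum_nonneg_of_nonneg ha hu])).ne'

lemma cfc_sqrt_add_mul_cfc_inv_sqrt_add (ha : 0 ≤ a) (hl : 0 < l) :
    cfc (fun u : ℝ => √(u + l)) a * cfc (fun u : ℝ => (√(u + l))⁻¹) a = 1 := by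
  have hne := sqrt_add_ne_zero_of_mem_spectrum ha hl
  rw [← cfc_mul _ _ a (by fun_prop) (by fun_prop (disch := exact hne)), ← cfc_one (R := ℝ) a]
  exact cfc_congr fun u hu => mul_inv_cancel₀ (hne u hu)

lemma cfc_inv_sqrt_add_mul_self (ha : 0 ≤ a) (hl : 0 < l) :
    cfc (fun u : ℝ => (√(u + l))⁻¹) a * a
      = cfc (fun u : ℝ => √u * (√(u + l))⁻¹) a * cfc Real.sqrt a := by
  have hne := sqrt_add_ne_zero_of_mem_spectrum ha hl
  nth_rewrite 2 [← cfc_id' ℝ a]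
  rw [← cfc_mul _ _ a (by fun_prop (disch := exact hne)) (by fun_prop),
    ← cfc_mul (fun u : ℝ => √u * (√(u + l))⁻¹) _ a (by fun_prop (disch := exact hne))
      (by fun_prop)]
  refine cfc_congr fun u hu => ?_
  rw [mul_right_comm, Real.mul_self_sqrt (spectrum_nonneg_of_nonneg ha hu), mul_comm]

end CStarAlgebra

section Operator

variable {H : Type*} [NormedAddCommGroup H] [InnerProductSpace ℂ H] [CompleteSpace H]
  {T : H →L[ℂ] H} {l : ℝ}

lemma norm_cfc_inv_sqrt_add_apply_self_le (hT : T.IsPositive) (hl : 0 < l) (v : H) :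
    ‖cfc (fun u : ℝ => (√(u + l))⁻¹) T (T v)‖ ≤ ‖cfc Real.sqrt T v‖ := by
  calc ‖cfc (fun u : ℝ => (√(u + l))⁻¹) T (T v)‖
      = ‖cfc (fun u : ℝ => √u * (√(u + l))⁻¹) T (cfc Real.sqrt T v)‖ := by
        rw [← mul_apply_eq_comp, cfc_inv_sqrt_add_mul_self (T.nonneg_iff_isPositive.mpr hT) hl]
        rfl
    _ ≤ ‖cfc Real.sqrt T v‖ :=
        (ContinuousLinearMap.le_of_opNorm_le _
          (norm_cfc_sqrt_mul_inv_sqrt_add_le_one T hl.le) _).trans_eq (one_mul _)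

lemma norm_cfc_inv_sqrt_add_apply_le (hT : T.IsPositive) (hl : 0 < l) (S : H →L[ℂ] H) (v : H) :
    ‖cfc (fun u : ℝ => (√(u + l))⁻¹) T (S v)‖
      ≤ ‖cfc (fun u : ℝ => (√(u + l))⁻¹) T * (T - S)‖ * ‖v‖ + ‖cfc Real.sqrt T v‖ := by
  set C := cfc (fun u : ℝ => (√(u + l))⁻¹) T
  have hsplit : C (S v) = C (T v) - (C * (T - S)) v := by simp
  rw [hsplit, add_comm]
  exact (norm_sub_le _ _).trans
    (add_le_add (norm_cfc_inv_sqrt_add_apply_self_le hT hl v) ((C * (T - S)).le_opNorm v))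

end Operator

theorem projected_variance_split_general {H : Type*} [NormedAddCommGroup H] [InnerProductSpace ℂ H]
    [CompleteSpace H]
    (T Tx P : H →L[ℂ] H) (hT : T.IsPositive)
    (l : ℝ) (hl : 0 < l) (ω : H) :
    ‖cfc (fun u : ℝ => (Real.sqrt (u + l))⁻¹) Tx (Tx ((1 - P) ω))‖
      ≤ ‖cfc (fun u : ℝ => Real.sqrt (u + l)) T * cfc (fun u : ℝ => (Real.sqrt (u + l))⁻¹) Tx‖
        * (‖cfc (fun u : ℝ => (Real.sqrt (u + l))⁻¹) T * (T - Tx)‖ * ‖(1 - P) ω‖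
            + ‖cfc (fun u : ℝ => Real.sqrt u) T ((1 - P) ω)‖) := by
  set Ax := cfc (fun u : ℝ => (√(u + l))⁻¹) Tx
  set B := cfc (fun u : ℝ => √(u + l)) T
  set C := cfc (fun u : ℝ => (√(u + l))⁻¹) T
  set v := (1 - P) ω
  have hfactor : Ax (Tx v) = (Ax * B) (C (Tx v)) := by
    rw [mul_apply_eq_comp, ← mul_apply_eq_comp B,
      cfc_sqrt_add_mul_cfc_inv_sqrt_add (T.nonneg_iff_isPositive.mpr hT) hl]
    rfl
  have hswap : ‖Ax * B‖ = ‖B * Ax‖ :=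
    IsSelfAdjoint.norm_mul_comm_s14 (cfc_predicate _ Tx) (cfc_predicate _ T)
  calc ‖Ax (Tx v)‖ ≤ ‖B * Ax‖ * ‖C (Tx v)‖ := hfactor ▸ hswap ▸ (Ax * B).le_opNorm _
    _ ≤ ‖B * Ax‖ * (‖C * (T - Tx)‖ * ‖v‖ + ‖cfc Real.sqrt T v‖) :=
      mul_le_mul_of_nonneg_left (norm_cfc_inv_sqrt_add_apply_le hT hl Tx v) (norm_nonneg _)

/-- Let `T` and `T_x` be positive self-adjoint bounded operators, `λ > 0`, `P` an orthogonal
projection, and `Δ₂ := ‖(T+λ)^(-1/2) (T − T_x)‖`. Then for any `ω`,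
`‖(T_x+λ)^(-1/2) T_x (I−P) ω‖ ≤ ‖(T+λ)^(1/2) (T_x+λ)^(-1/2)‖ · (Δ₂ ‖(I−P)ω‖ + ‖T^(1/2) (I−P)ω‖)`. -/
theorem projected_variance_split {H : Type*} [NormedAddCommGroup H] [InnerProductSpace ℂ H]
    [CompleteSpace H] [TopologicalSpace.SeparableSpace H]
    (T Tx P : H →L[ℂ] H) (hT : T.IsPositive) (hTx : Tx.IsPositive)
    (hP : IsIdempotentElem P) (hPsa : IsSelfAdjoint P)
    (l : ℝ) (hl : 0 < l) (ω : H) :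
    ‖cfc (fun u : ℝ => (Real.sqrt (u + l))⁻¹) Tx (Tx ((1 - P) ω))‖
      ≤ ‖cfc (fun u : ℝ => Real.sqrt (u + l)) T * cfc (fun u : ℝ => (Real.sqrt (u + l))⁻¹) Tx‖
        * (‖cfc (fun u : ℝ => (Real.sqrt (u + l))⁻¹) T * (T - Tx)‖ * ‖(1 - P) ω‖
            + ‖cfc (fun u : ℝ => Real.sqrt u) T ((1 - P) ω)‖) :=
  projected_variance_split_general T Tx P hT l hl ω
end
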